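/- Let N be geometric on {1,2,...} with parameter 1-p, 0 < p < 1, and X exponential with rate λ = -ln p. Then E[N] - E[X] = 1/(1-p) + 1/ln p, and this quantity lies in [0,1]. -/

import Mathlib

/-! The difference is `E[N] - E[X]` with `E[N] = 1/(1-p)` and `E[X] = 1/(-log p)`, so it suffices
to bracket `E[X]` between `E[N] - 1 = p/(1-p)` and `E[N]`. Both bounds are the elementary estimate
`log x ≤ x - 1`, applied at `x = p` and at `x = 1/p`. -/

namespace Real

lemma one_div_neg_log_le_one_div_one_sub {p : ℝ} (hp0 : 0 < p) (hp1 : p < 1) :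
    1 / (-log p) ≤ 1 / (1 - p) :=
  one_div_le_one_div_of_le (by linarith) (by linarith [log_le_sub_one_of_pos hp0])

lemma div_one_sub_le_one_div_neg_log {p : ℝ} (hp0 : 0 < p) (hp1 : p < 1) :
    p / (1 - p) ≤ 1 / (-log p) := by
  have hlog : -log p ≤ (1 - p) / p := by
    rw [sub_div, div_self hp0.ne', one_div]
    linarith [one_sub_inv_le_log_of_pos hp0]
  calc p / (1 - p) = 1 / ((1 - p) / p) := (one_div_div _ _).symm
    _ ≤ 1 / (-log p) := one_div_le_one_div_of_le (neg_pos.2 (log_neg hp0 hp1)) hlog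

end Real

/-- For a geometric random variable on `{1,2,...}` with parameter `1-p`
(mean `1/(1-p)`) and an exponential random variable with rate `λ = -ln p`
(mean `1/λ = -1/ln p`), the difference of means equals `1/(1-p) + 1/ln p`,
and this quantity lies in `[0,1]`. -/
theorem stmt_4 (p : ℝ) (hp0 : 0 < p) (hp1 : p < 1) :
    1 / (1 - p) - 1 / (-Real.log p) = 1 / (1 - p) + 1 / Real.log p ∧
    0 ≤ 1 / (1 - p) + 1 / Real.log p ∧
    1 / (1 - p) + 1 / Real.log p ≤ 1 := by
  have hdiff : 1 / (1 - p) - 1 / (-Real.log p) = 1 / (1 - p) + 1 / Real.log p := by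
    rw [one_div_neg_eq_neg_one_div, sub_neg_eq_add]
  have hmean : 1 / (1 - p) - 1 = p / (1 - p) := by
    field_simp [(sub_pos.2 hp1).ne']
    ring
  have hlow := Real.div_one_sub_le_one_div_neg_log hp0 hp1
  have hup := Real.one_div_neg_log_le_one_div_one_sub hp0 hp1
  refine ⟨hdiff, ?_, ?_⟩ <;> rw [← hdiff] <;> linarith
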